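/- With F_r the linear functional defined by F_r(⟨x⟩_{r,n}) = a^n, one has F_r(x^k h_n(x,a,r)) = 0 for 0 ≤ k < n, and F_r(x^n h_n(x,a,r)) = (q^r a)^n q^{C(n,2)} [n]!. -/
import Mathlib


noncomputable section

open Finset Polynomial

/-- q-analogue [m] = (1-q^m)/(1-q) = 1 + q + ... + q^(m-1). -/
def qb (q : ℚ) (m : ℕ) : ℚ := ∑ i ∈ Finset.range m, q ^ i

/-- q-factorial [n]! -/
def qfact (q : ℚ) (n : ℕ) : ℚ := ∏ i ∈ Finset.range n, qb q (i + 1)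

/-- Gaussian binomial coefficient [n choose k]_q via the q-Pascal recurrence. -/
def qbinom (q : ℚ) : ℕ → ℕ → ℚ
  | _, 0 => 1
  | 0, _ + 1 => 0
  | n + 1, k + 1 => qbinom q n k + q ^ (k + 1) * qbinom q n (k + 1)

/-- Generalized q-Stirling numbers S(n,k,r). -/
def qS (q : ℚ) (r : ℕ) : ℕ → ℕ → ℚ
  | 0, 0 => 1
  | 0, _ + 1 => 0
  | n + 1, 0 => qb q r * qS q r n 0
  | n + 1, k + 1 => qS q r n k + qb q (k + 1 + r) * qS q r n (k + 1)

/-- Generalized falling factorial ⟨x⟩_{r,k} = ∏_{j=0}^{k-1} (x - [r+j]). -/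
def qfall (q : ℚ) (r : ℕ) (x : ℚ) (k : ℕ) : ℚ := ∏ j ∈ Finset.range k, (x - qb q (r + j))

/-- Falling factorial polynomial ⟨X⟩_{r,n}. -/
def ffpoly (q : ℚ) (r : ℕ) (n : ℕ) : Polynomial ℚ :=
  ∏ j ∈ Finset.range n, (Polynomial.X - Polynomial.C (qb q (r + j)))

/-- q-Poisson-Charlier polynomial h_n(x,a,r) as a polynomial. -/
def hPCpoly (q a : ℚ) (r : ℕ) (n : ℕ) : Polynomial ℚ :=
  ∑ k ∈ Finset.range (n + 1),
    Polynomial.C ((-a) ^ k * q ^ Nat.choose k 2 * qbinom q n k) * ffpoly q r (n - k)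


lemma qb_zero (q : ℚ) : qb q 0 = 0 := by simp [qb]
lemma qb_succ (q : ℚ) (m : ℕ) : qb q (m + 1) = qb q m + q ^ m := by simp [qb, Finset.sum_range_succ]
lemma qb_succ' (q : ℚ) (m : ℕ) : qb q (m + 1) = 1 + q * qb q m := by
  simp [qb, Finset.sum_range_succ', pow_succ, Finset.mul_sum, mul_comm, add_comm]
lemma qb_add (q : ℚ) (u v : ℕ) : qb q (u + v) = qb q u + q ^ u * qb q v := by
  induction v with
  | zero => simp [qb_zero]
  | succ v ih => rw [← Nat.add_assoc, qb_succ, ih, qb_succ, pow_add]; ring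

lemma qbinom_zero_right (q : ℚ) (n : ℕ) : qbinom q n 0 = 1 := by cases n <;> rfl

lemma qbinom_eq_zero (q : ℚ) {n k : ℕ} (h : n < k) : qbinom q n k = 0 := by
  induction n generalizing k with
  | zero => match k, h with
    | k + 1, _ => rfl
  | succ n ih =>
    match k, h with
    | k + 1, h =>
      rw [qbinom, ih (by omega), ih (by omega)]; ring

lemma qbinom_self (q : ℚ) (n : ℕ) : qbinom q n n = 1 := by
  induction n with
  | zero => rfl
  | succ n ih => rw [qbinom, ih, qbinom_eq_zero q (by omega)]; ring

lemma qbinom_one (q : ℚ) (n : ℕ) : qbinom q n 1 = qb q n := by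
  induction n with
  | zero => simp [qbinom, qb_zero]
  | succ n ih =>
    show qbinom q n 0 + q ^ 1 * qbinom q n 1 = _
    rw [qbinom_zero_right, ih, qb_succ']; ring

lemma qbinom_succ_succ (q : ℚ) (n k : ℕ) :
    qbinom q (n + 1) (k + 1) = qbinom q n k + q ^ (k + 1) * qbinom q n (k + 1) := rfl

lemma pascal2 (q : ℚ) (n k : ℕ) :
    qbinom q (n + 1) (k + 1) = q ^ (n - k) * qbinom q n k + qbinom q n (k + 1) := by
  induction n generalizing k with
  | zero =>
    match k with
    | 0 => simp [qbinom]
    | k + 1 => simp [qbinom_eq_zero q (show 0 < k+1 by omega), qbinom_eq_zero q (show 0 < k+2 by omega), qbinom_eq_zero q (show 1 < k+2 by omega)]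
  | succ n ih =>
    match k with
    | 0 =>
      rw [qbinom_succ_succ, qbinom_zero_right, qbinom_one]
      have h1 := qb_succ q (n+1)
      have h2 := qb_succ' q (n+1)
      simp only [pow_one, Nat.zero_add, Nat.sub_zero, mul_one, zero_add] at *
      linarith
    | k + 1 =>
      rcases lt_or_ge n (k+1) with hk | hk
      · rcases Nat.lt_or_ge n k with hk2 | hk2
        · rw [qbinom_eq_zero q (show n+2 < k+2 by omega), qbinom_eq_zero q (show n+1 < k+1 by omega), qbinom_eq_zero q (show n+1 < k+2 by omega)]
          ring
        · have : n = k := by omega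
          subst this
          rw [qbinom_self, qbinom_self, qbinom_eq_zero q (show n+1 < n+2 by omega), Nat.sub_self]
          norm_num
      · conv_lhs => rw [qbinom_succ_succ q (n+1) (k+1), ih k, ih (k+1)]
        conv_rhs => rw [qbinom_succ_succ q n k, qbinom_succ_succ q n (k+1)]
        have e1 : n + 1 - (k + 1) = n - k := by omega
        rw [e1]
        have hq : q ^ (k+2) * q ^ (n-(k+1)) = q ^ (n-k) * q ^ (k+1) := by
          rw [← pow_add, ← pow_add]; congr 1; omega
        linear_combination (qbinom q n (k+1)) * hq

lemma absorb (q : ℚ) (n : ℕ) :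
    (∀ k, qb q (k+1) * qbinom q (n+1) (k+1) = qb q (n+1) * qbinom q n k) ∧
    (∀ k, qb q (n+1-k) * qbinom q (n+1) k = qb q (n+1) * qbinom q n k) := by
  induction n with
  | zero =>
    constructor
    · intro k
      match k with
      | 0 => simp [qbinom_self]
      | k + 1 =>
        rw [qbinom_eq_zero q (show 1 < k+2 by omega), qbinom_eq_zero q (show 0 < k+1 by omega)]
        ring
    · intro k
      match k with
      | 0 => simp [qbinom_zero_right]
      | 1 => simp [qbinom_self, qbinom_eq_zero q (show 0 < 1 by omega), qb_zero]
      | k + 2 =>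
        rw [qbinom_eq_zero q (show 1 < k+2 by omega), qbinom_eq_zero q (show 0 < k+2 by omega)]
        ring
  | succ n ih =>
    obtain ⟨ih1, ih2⟩ := ih
    have L1 : ∀ k, qb q (k+1) * qbinom q (n+2) (k+1) = qb q (n+2) * qbinom q (n+1) k := by
      intro k
      rcases le_or_gt k (n+1) with hk | hk
      · rw [pascal2 q (n+1) k, mul_add, ih1 k, ← ih2 k]
        rw [show qb q (n+2) = qb q (n+1-k) + q ^ (n+1-k) * qb q (k+1) by
          rw [← qb_add]; congr 1; omega]
        ring
      · rw [qbinom_eq_zero q (show n+2 < k+1 by omega), qbinom_eq_zero q (show n+1 < k by omega)]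
        ring
    refine ⟨L1, ?_⟩
    intro k
    match k with
    | 0 => simp [qbinom_zero_right]
    | k + 1 =>
      rcases le_or_gt (k+1) (n+1) with hk | hk
      · rw [qbinom_succ_succ q (n+1) k, mul_add]
        have h1 : qb q (n+2-(k+1)) * qbinom q (n+1) k = qb q (n+1) * qbinom q n k := by
          have : n + 2 - (k+1) = n + 1 - k := by omega
          rw [this, ih2 k]
        have h2 : qb q (n+2-(k+1)) = qb q (n+1-(k+1)) + q ^ (n-k) := by
          rw [show n+2-(k+1) = (n+1-(k+1))+1 by omega, qb_succ]
          congr 2; omega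
        rw [h1]
        have h3 : qb q (n+2-(k+1)) * (q ^ (k+1) * qbinom q (n+1) (k+1))
            = q ^ (k+1) * (qb q (n+1) * qbinom q n (k+1)) + q ^ (n+1) * qbinom q (n+1) (k+1) := by
          have hp : q ^ (n-k) * q ^ (k+1) = q ^ (n+1) := by rw [← pow_add]; congr 1; omega
          rw [h2]
          linear_combination (q^(k+1)) * ih2 (k+1) + qbinom q (n+1) (k+1) * hp
        rw [h3, qbinom_succ_succ q n k, qb_succ q (n+1)]
        ring
      · rcases Nat.lt_or_ge (n+1) k with hk2 | hk2
        · rw [qbinom_eq_zero q (show n+2 < k+1 by omega), qbinom_eq_zero q (show n+1 < k+1 by omega)]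
          ring
        · have : k = n + 1 := by omega
          subst this
          rw [Nat.sub_self, qb_zero, qbinom_eq_zero q (show n+1 < n+2 by omega)]
          ring

lemma ffpoly_zero (q : ℚ) (r : ℕ) : ffpoly q r 0 = 1 := by simp [ffpoly]

lemma ffpoly_succ (q : ℚ) (r n : ℕ) :
    ffpoly q r (n + 1) = ffpoly q r n * (X - C (qb q (r + n))) :=
  Finset.prod_range_succ _ n

lemma choose_succ_two (k : ℕ) : (k + 1).choose 2 = k.choose 2 + k := by
  rw [Nat.choose_succ_succ, Nat.choose_one_right, Nat.add_comm]

lemma hPC_zero (q a : ℚ) (r : ℕ) : hPCpoly q a r 0 = 1 := by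
  simp [hPCpoly, ffpoly_zero, qbinom]

lemma hPC_rec (q a : ℚ) (r : ℕ) (n : ℕ) :
    hPCpoly q a r (n + 2)
      = (X - C (qb q (r + n + 1) + a * q ^ (n + 1))) * hPCpoly q a r (n + 1)
        - C (a * q ^ (r + n) * qb q (n + 1)) * hPCpoly q a r n := by
  have step1 : hPCpoly q a r (n+2)
      = ((∑ k ∈ Finset.range (n+2), C ((-a)^(k+1) * q^((k+1).choose 2) * (q^(n+1-k) * qbinom q (n+1) k)) * ffpoly q r (n+1-k))
        + ∑ k ∈ Finset.range (n+2), C ((-a)^(k+1) * q^((k+1).choose 2) * qbinom q (n+1) (k+1)) * ffpoly q r (n+1-k))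
        + ffpoly q r (n+2) := by
    conv_lhs => rw [show hPCpoly q a r (n+2)
      = ∑ k ∈ Finset.range (n+3), C ((-a)^k * q^(k.choose 2) * qbinom q (n+2) k) * ffpoly q r (n+2-k) from rfl]
    rw [Finset.sum_range_succ']
    congr 1
    · rw [← Finset.sum_add_distrib]
      refine Finset.sum_congr rfl fun k hk => ?_
      rw [Finset.mem_range] at hk
      rw [pascal2 q (n+1) k, show n+2-(k+1) = n+1-k by omega,
        mul_add ((-a)^(k+1) * q^((k+1).choose 2)), C_add, add_mul]
    · simp [qbinom_zero_right]
  have hA : (∑ k ∈ Finset.range (n+2),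
      C ((-a)^(k+1) * q^((k+1).choose 2) * (q^(n+1-k) * qbinom q (n+1) k)) * ffpoly q r (n+1-k))
      = C (-(a * q ^ (n+1))) * hPCpoly q a r (n + 1) := by
    rw [show hPCpoly q a r (n+1)
      = ∑ k ∈ Finset.range (n+2), C ((-a)^k * q^(k.choose 2) * qbinom q (n+1) k) * ffpoly q r (n+1-k) from rfl,
      Finset.mul_sum]
    refine Finset.sum_congr rfl fun k hk => ?_
    rw [Finset.mem_range] at hk
    conv_rhs => rw [← mul_assoc, ← C_mul]
    congr 2
    have h2 : q ^ (k.choose 2 + k) * q ^ (n+1-k) = q ^ (k.choose 2) * q ^ (n+1) := by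
      rw [← pow_add, ← pow_add]; congr 1; omega
    rw [choose_succ_two]
    linear_combination ((-a)^k * (-a) * qbinom q (n+1) k) * h2
  have hB : ffpoly q r (n+2) + (∑ k ∈ Finset.range (n+2),
        C ((-a)^(k+1) * q^((k+1).choose 2) * qbinom q (n+1) (k+1)) * ffpoly q r (n+1-k))
      = ∑ k ∈ Finset.range (n+2),
        C ((-a)^k * q^(k.choose 2) * qbinom q (n+1) k) * ffpoly q r (n+2-k) := by
    have hdrop : ∑ k ∈ Finset.range (n+3),
        C ((-a)^k * q^(k.choose 2) * qbinom q (n+1) k) * ffpoly q r (n+2-k)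
        = ∑ k ∈ Finset.range (n+2),
          C ((-a)^k * q^(k.choose 2) * qbinom q (n+1) k) * ffpoly q r (n+2-k) := by
      rw [Finset.sum_range_succ, qbinom_eq_zero q (show n+1 < n+2 by omega)]
      simp
    conv_rhs => rw [← hdrop, Finset.sum_range_succ']
    rw [add_comm]
    congr 1
    · refine Finset.sum_congr rfl fun k hk => ?_
      rw [Finset.mem_range] at hk
      congr 2
      omega
    · simp [qbinom_zero_right]
  have hU : (∑ k ∈ Finset.range (n+2),
        C ((-a)^k * q^(k.choose 2) * (qbinom q (n+1) k * qb q k) * q^(r+n+1-k)) * ffpoly q r (n+1-k))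
      = C (-(a * q^(r+n) * qb q (n+1))) * hPCpoly q a r n := by
    rw [Finset.sum_range_succ']
    rw [show hPCpoly q a r n
      = ∑ k ∈ Finset.range (n+1), C ((-a)^k * q^(k.choose 2) * qbinom q n k) * ffpoly q r (n-k) from rfl,
      Finset.mul_sum]
    have h0 : C ((-a)^0 * q^(Nat.choose 0 2) * (qbinom q (n+1) 0 * qb q 0) * q^(r+n+1-0)) * ffpoly q r (n+1-0) = 0 := by
      simp [qb_zero]
    rw [h0, add_zero]
    refine Finset.sum_congr rfl fun k hk => ?_
    rw [Finset.mem_range] at hk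
    rw [← mul_assoc (C (-(a * q^(r+n) * qb q (n+1)))), ← C_mul,
      show n+1-(k+1) = n-k by omega]
    congr 2
    have e1 := (absorb q n).1 k
    have h2 : q ^ (k.choose 2 + k) * q ^ (r+n+1-(k+1)) = q ^ (k.choose 2) * q ^ (r+n) := by
      rw [← pow_add, ← pow_add]; congr 1; omega
    rw [choose_succ_two]
    linear_combination ((-a)^k * (-a) * q^(k.choose 2 + k) * q^(r+n+1-(k+1))) * e1
      + ((-a)^k * (-a) * qb q (n+1) * qbinom q n k) * h2
  have hT : (∑ k ∈ Finset.range (n+2),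
        C ((-a)^k * q^(k.choose 2) * qbinom q (n+1) k) * ffpoly q r (n+2-k))
      = X * hPCpoly q a r (n+1) - C (qb q (r+n+1)) * hPCpoly q a r (n+1)
        + C (-(a * q^(r+n) * qb q (n+1))) * hPCpoly q a r n := by
    have hsplit : ∀ k ∈ Finset.range (n+2),
        C ((-a)^k * q^(k.choose 2) * qbinom q (n+1) k) * ffpoly q r (n+2-k)
        = X * (C ((-a)^k * q^(k.choose 2) * qbinom q (n+1) k) * ffpoly q r (n+1-k))
          - C (qb q (r+n+1)) * (C ((-a)^k * q^(k.choose 2) * qbinom q (n+1) k) * ffpoly q r (n+1-k))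
          + C ((-a)^k * q^(k.choose 2) * (qbinom q (n+1) k * qb q k) * q^(r+n+1-k)) * ffpoly q r (n+1-k) := by
      intro k hk
      rw [Finset.mem_range] at hk
      have h1 : ffpoly q r (n+2-k) = ffpoly q r (n+1-k) * (X - C (qb q (r+(n+1-k)))) := by
        rw [← ffpoly_succ]; congr 1; omega
      have h2 : qb q (r+(n+1-k)) = qb q (r+n+1) - q^(r+n+1-k) * qb q k := by
        have h3 := qb_add q (r+(n+1-k)) k
        rw [show r+(n+1-k)+k = r+n+1 by omega] at h3
        rw [show r+(n+1-k) = r+n+1-k from by omega] at h3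
        rw [show r+(n+1-k) = r+n+1-k from by omega]
        linarith [h3]
      rw [h1, h2]
      simp only [map_sub, C_mul]
      ring
    rw [Finset.sum_congr rfl hsplit, Finset.sum_add_distrib, Finset.sum_sub_distrib,
      ← Finset.mul_sum, ← Finset.mul_sum, hU]
    rw [show hPCpoly q a r (n+1)
      = ∑ k ∈ Finset.range (n+2), C ((-a)^k * q^(k.choose 2) * qbinom q (n+1) k) * ffpoly q r (n+1-k) from rfl]
  rw [step1, hA]
  have hBT := hB.trans hT
  rw [show ∀ (A B E : Polynomial ℚ), (A + B) + E = A + (E + B) from fun A B E => by ring]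
  rw [hBT]
  simp only [C_add, map_neg]
  ring

lemma qS_eq_zero (q : ℚ) (r : ℕ) : ∀ {n k : ℕ}, n < k → qS q r n k = 0 := by
  intro n
  induction n with
  | zero => intro k h; match k, h with | k + 1, _ => rfl
  | succ n ih =>
    intro k h
    match k, h with
    | k + 1, h => rw [qS, ih (by omega), ih (by omega)]; ring

lemma qS_self (q : ℚ) (r : ℕ) (n : ℕ) : qS q r n n = 1 := by
  induction n with
  | zero => rfl
  | succ n ih => rw [qS, ih, qS_eq_zero q r (by omega)]; ring

lemma Xpow_eq (q : ℚ) (r : ℕ) (k : ℕ) :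
    (X : Polynomial ℚ) ^ k = ∑ j ∈ Finset.range (k + 1), C (qS q r k j) * ffpoly q r j := by
  induction k with
  | zero => simp [qS, ffpoly_zero]
  | succ k ih =>
    rw [pow_succ, ih, Finset.sum_mul]
    have hterm : ∀ j ∈ Finset.range (k+1), (C (qS q r k j) * ffpoly q r j) * X
        = C (qS q r k j) * ffpoly q r (j+1) + C (qS q r k j * qb q (r+j)) * ffpoly q r j := by
      intro j hj
      rw [ffpoly_succ, C_mul]
      ring
    rw [Finset.sum_congr rfl hterm, Finset.sum_add_distrib]
    conv_rhs => rw [Finset.sum_range_succ']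
    have hq : ∀ j ∈ Finset.range (k+1), C (qS q r (k+1) (j+1)) * ffpoly q r (j+1)
        = C (qS q r k j) * ffpoly q r (j+1) + C (qb q (j+1+r) * qS q r k (j+1)) * ffpoly q r (j+1) := by
      intro j hj
      rw [show qS q r (k+1) (j+1) = qS q r k j + qb q (j+1+r) * qS q r k (j+1) from rfl, C_add, add_mul]
    rw [Finset.sum_congr rfl hq, Finset.sum_add_distrib, add_assoc]
    congr 1
    have hdrop : ∑ j ∈ Finset.range (k+1), C (qb q (j+1+r) * qS q r k (j+1)) * ffpoly q r (j+1)
        = ∑ j ∈ Finset.range k, C (qb q (j+1+r) * qS q r k (j+1)) * ffpoly q r (j+1) := by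
      rw [Finset.sum_range_succ, qS_eq_zero q r (show k < k+1 by omega)]
      simp
    rw [hdrop, Finset.sum_range_succ']
    congr 1
    · refine Finset.sum_congr rfl fun j hj => ?_
      rw [Nat.add_comm r (j+1), mul_comm (qS q r k (j+1)) (qb q (j+1+r))]
    · rw [show qS q r (k+1) 0 = qb q r * qS q r k 0 from rfl, Nat.add_zero,
        mul_comm (qS q r k 0) (qb q r)]

lemma Lvanish (q : ℚ) {j n : ℕ} (h : j < n) : ∏ i ∈ Finset.range n, qb q (j - i) = 0 :=
  Finset.prod_eq_zero (Finset.mem_range.mpr h) (by rw [Nat.sub_self]; exact qb_zero q)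

lemma L3 (q : ℚ) (j n : ℕ) :
    ∏ i ∈ Finset.range (n+1), qb q (j+1-i)
      = qb q (n+1) * ∏ i ∈ Finset.range n, qb q (j-i)
        + q^(n+1) * ∏ i ∈ Finset.range (n+1), qb q (j-i) := by
  rw [Finset.prod_range_succ' (fun i => qb q (j+1-i)), Finset.prod_range_succ (fun i => qb q (j-i))]
  have h1 : ∏ i ∈ Finset.range n, qb q (j+1-(i+1)) = ∏ i ∈ Finset.range n, qb q (j-i) :=
    Finset.prod_congr rfl fun i _ => by congr 1; omega
  rw [h1]
  rcases le_or_gt n j with hnj | hnj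
  · rw [show j+1-0 = (n+1)+(j-n) by omega, qb_add]
    ring
  · rw [Lvanish q hnj]
    ring

lemma Flin (F : Polynomial ℚ →ₗ[ℚ] ℚ) (c : ℚ) (p : Polynomial ℚ) : F (C c * p) = c * F p := by
  rw [← Polynomial.smul_eq_C_mul, map_smul, smul_eq_mul]

lemma hPC_one (q a : ℚ) (r : ℕ) : hPCpoly q a r 1 = X - C (qb q r) - C a := by
  rw [show hPCpoly q a r 1 = ∑ k ∈ Finset.range 2,
    C ((-a)^k * q^(Nat.choose k 2) * qbinom q 1 k) * ffpoly q r (1-k) from rfl]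
  rw [Finset.sum_range_succ, Finset.sum_range_one]
  norm_num [qbinom_zero_right, qbinom_self, ffpoly_succ, ffpoly_zero]
  ring

lemma Wform (q a : ℚ) (r : ℕ) (F : Polynomial ℚ →ₗ[ℚ] ℚ)
    (hF : ∀ n : ℕ, F (ffpoly q r n) = a ^ n) :
    ∀ n j : ℕ, F (ffpoly q r j * hPCpoly q a r n)
      = a ^ j * (q ^ (r * n + n.choose 2) * ∏ i ∈ Finset.range n, qb q (j - i)) := by
  intro n
  induction n using Nat.twoStepInduction with
  | zero =>
    intro j
    rw [hPC_zero, mul_one, hF]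
    simp
  | one =>
    intro j
    rw [hPC_one]
    have hx : ffpoly q r j * (X - C (qb q r) - C a)
        = ffpoly q r (j+1) + C (qb q (r+j) - qb q r - a) * ffpoly q r j := by
      rw [ffpoly_succ]
      simp only [map_sub]
      ring
    rw [hx, map_add, Flin, hF, hF, qb_add q r j]
    simp [Finset.prod_range_one]
    ring
  | more n ih1 ih2 =>
    intro j
    have expand : ffpoly q r j * hPCpoly q a r (n+2)
        = ffpoly q r (j+1) * hPCpoly q a r (n+1)
          + C (qb q (r+j) - (qb q (r+n+1) + a*q^(n+1))) * (ffpoly q r j * hPCpoly q a r (n+1))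
          - C (a*q^(r+n)*qb q (n+1)) * (ffpoly q r j * hPCpoly q a r n) := by
      rw [hPC_rec, ffpoly_succ q r j]
      simp only [map_sub, map_add, C_mul]
      ring
    rw [expand, map_sub, map_add, Flin, Flin, ih1 j, ih2 j, ih2 (j+1)]
    have hK2 : q ^ (r*(n+2) + (n+2).choose 2) = q ^ (r*(n+1) + (n+1).choose 2) * q^(r+n+1) := by
      rw [← pow_add]
      congr 1
      rw [show (n+2) = (n+1)+1 from rfl, choose_succ_two]
      ring
    have hK1 : q ^ (r*(n+1) + (n+1).choose 2) = q ^ (r*n + n.choose 2) * q^(r+n) := by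
      rw [← pow_add]
      congr 1
      rw [choose_succ_two]
      ring
    have hP2 : ∏ i ∈ Finset.range (n+2), qb q (j-i)
        = (∏ i ∈ Finset.range (n+1), qb q (j-i)) * qb q (j-(n+1)) :=
      Finset.prod_range_succ _ _
    have hdiff : (qb q (r+j) - qb q (r+n+1)) * ∏ i ∈ Finset.range (n+1), qb q (j-i)
        = q^(r+n+1) * (qb q (j-(n+1)) * ∏ i ∈ Finset.range (n+1), qb q (j-i)) := by
      rcases le_or_gt (n+1) j with hnj | hnj
      · rw [show r+j = (r+n+1)+(j-(n+1)) by omega, qb_add]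
        ring
      · rw [Lvanish q hnj]
        ring
    rw [L3 q j n, hP2, hK2, hK1]
    linear_combination (a^j * q^(r*n+n.choose 2) * q^(r+n)) * hdiff


/-- F_r(x^k h_n) = 0 for k < n and F_r(x^n h_n) = (q^r a)^n q^{C(n,2)} [n]!. -/
theorem F_moments_hPC (q a : ℚ) (r : ℕ) (F : Polynomial ℚ →ₗ[ℚ] ℚ)
    (hF : ∀ n : ℕ, F (ffpoly q r n) = a ^ n) (n : ℕ) :
    (∀ k < n, F (Polynomial.X ^ k * hPCpoly q a r n) = 0) ∧
    F (Polynomial.X ^ n * hPCpoly q a r n) =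
      (q ^ r * a) ^ n * q ^ Nat.choose n 2 * qfact q n := by
  have hXk : ∀ k : ℕ, F (X ^ k * hPCpoly q a r n)
      = ∑ j ∈ Finset.range (k + 1),
          qS q r k j * (a ^ j * (q ^ (r * n + n.choose 2) * ∏ i ∈ Finset.range n, qb q (j - i))) := by
    intro k
    rw [Xpow_eq q r k, Finset.sum_mul, map_sum]
    refine Finset.sum_congr rfl fun j hj => ?_
    rw [mul_assoc, Flin, Wform q a r F hF n j]
  constructor
  · intro k hk
    rw [hXk k]
    refine Finset.sum_eq_zero fun j hj => ?_
    rw [Finset.mem_range] at hj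
    rw [Lvanish q (show j < n by omega)]
    ring
  · rw [hXk n]
    rw [Finset.sum_eq_single n]
    · rw [qS_self]
      have hfact : ∏ i ∈ Finset.range n, qb q (n - i) = qfact q n := by
        rw [qfact, ← Finset.prod_range_reflect (fun i => qb q (i + 1)) n]
        exact Finset.prod_congr rfl fun i hi => by
          rw [Finset.mem_range] at hi
          congr 1
          omega
      rw [hfact, mul_pow, pow_add, pow_mul]
      ring
    · intro j hj hjn
      rw [Finset.mem_range] at hj
      rw [Lvanish q (show j < n by omega)]
      ring
    · intro h
      exact absurd (Finset.mem_range.mpr (by omega)) h
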